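/- arXiv:1602.02442 — 5 statements merged into one kernel-verified Lean document; each statement's English description precedes it below -/
import Mathlib

section
/- Let f : ℝ^d → ℝ be convex and L-smooth, and γ > 0. Define g_{γf}(x) = (1/γ)(x - prox_{γf}(x)). Then for all x, y ∈ ℝ^d, ⟨g_{γf}(x) - g_{γf}(y), x - y⟩ ≥ γ(1 + 1/(Lγ))‖g_{γf}(x) - g_{γf}(y)‖². -/
/-!
At a proximal point `p` of `x`, Fermat's rule gives `x - p = γ ∇f(p)`, so `g_{γf}(x) = ∇f(px)` and
`x - y = (px - py) + γ (g_{γf}(x) - g_{γf}(y))`. The claim thus reduces to the Baillon–Haddad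
cocoercivity `‖∇f a - ∇f b‖² / L ≤ ⟪∇f a - ∇f b, a - b⟫` of the gradient of a convex `L`-smooth
function. It is the sum of the two bounds `f a + ⟪∇f a, b - a⟫ + ‖∇f b - ∇f a‖² / (2L) ≤ f b` (and
the one with `a`, `b` swapped), each obtained by comparing the first-order convexity bound with the
descent lemma at a gradient step.
-/

open RealInnerProductSpace

/-- `p` is the proximal point `prox_{γ f}(x)`. -/
def IsProx {d : ℕ} (γ : ℝ) (f : EuclideanSpace ℝ (Fin d) → ℝ)
    (x p : EuclideanSpace ℝ (Fin d)) : Prop :=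
  ∀ y, γ * f p + ‖x - p‖ ^ 2 / 2 ≤ γ * f y + ‖x - y‖ ^ 2 / 2

open scoped Gradient NNReal

section

variable {E : Type*} [NormedAddCommGroup E] [InnerProductSpace ℝ E] [CompleteSpace E]
  {f : E → ℝ}

theorem DifferentiableAt.hasDerivAt_comp_add_smul {a v : E} {t : ℝ}
    (hf : DifferentiableAt ℝ f (a + t • v)) :
    HasDerivAt (fun s : ℝ => f (a + s • v)) ⟪∇ f (a + t • v), v⟫ t := by
  have hline : HasDerivAt (fun s : ℝ => a + s • v) v t := by
    simpa using ((hasDerivAt_id t).smul_const v).const_add a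
  rw [inner_gradient_left]
  exact hf.hasFDerivAt.comp_hasDerivAt t hline

theorem le_add_inner_gradient_add_sq_of_lipschitzWith {K : ℝ≥0} (hf : Differentiable ℝ f)
    (hlip : LipschitzWith K (∇ f)) (a b : E) :
    f b ≤ f a + ⟪∇ f a, b - a⟫ + K / 2 * ‖b - a‖ ^ 2 := by
  set v := b - a
  let φ : ℝ → ℝ := fun t => f (a + t • v) - t * ⟪∇ f a, v⟫ - K / 2 * ‖v‖ ^ 2 * t ^ 2
  have hφ : ∀ t, HasDerivAt φ (⟪∇ f (a + t • v), v⟫ - ⟪∇ f a, v⟫ - K * ‖v‖ ^ 2 * t) t := by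
    intro t
    have hquad := (hasDerivAt_pow 2 t).const_mul (K / 2 * ‖v‖ ^ 2)
    have hsum := ((hf (a + t • v)).hasDerivAt_comp_add_smul.sub
      ((hasDerivAt_id t).mul_const ⟪∇ f a, v⟫)).sub hquad
    refine hsum.congr_deriv ?_
    push_cast
    ring
  have hφ' : ∀ t ∈ interior (Set.Ici (0 : ℝ)),
      ⟪∇ f (a + t • v), v⟫ - ⟪∇ f a, v⟫ - K * ‖v‖ ^ 2 * t ≤ 0 := by
    intro t ht
    rw [interior_Ici, Set.mem_Ioi] at ht
    have hgrad : ‖∇ f (a + t • v) - ∇ f a‖ ≤ K * (t * ‖v‖) := by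
      simpa [norm_smul, abs_of_pos ht] using hlip.norm_sub_le (a + t • v) a
    have := real_inner_le_norm (∇ f (a + t • v) - ∇ f a) v
    rw [inner_sub_left] at this
    nlinarith [norm_nonneg v]
  have hanti : AntitoneOn φ (Set.Ici 0) :=
    antitoneOn_of_hasDerivWithinAt_nonpos (convex_Ici 0)
      (HasDerivAt.continuousOn fun t _ => hφ t) (fun t _ => (hφ t).hasDerivWithinAt) hφ'
  have := hanti Set.self_mem_Ici (zero_le_one' ℝ) zero_le_one
  simp only [φ, v, zero_smul, add_zero, one_smul, zero_mul, sub_zero, one_mul, one_pow, mul_one,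
    add_sub_cancel] at this
  linarith

theorem ConvexOn.add_inner_gradient_le (hconv : ConvexOn ℝ Set.univ f)
    {a : E} (hf : DifferentiableAt ℝ f a) (b : E) :
    f a + ⟪∇ f a, b - a⟫ ≤ f b := by
  have hline : ConvexOn ℝ Set.univ fun t : ℝ => f (a + t • (b - a)) := by
    simpa [Function.comp_def, AffineMap.lineMap_apply_module', add_comm]
      using hconv.comp_affineMap (AffineMap.lineMap a b)
  have hderiv := DifferentiableAt.hasDerivAt_comp_add_smul (v := b - a) (t := 0)
    (by rwa [zero_smul, add_zero])
  rw [zero_smul, add_zero] at hderiv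
  have := hline.le_slope_of_hasDerivAt (Set.mem_univ 0) (Set.mem_univ 1) zero_lt_one hderiv
  simp only [slope_def_field, zero_smul, one_smul, add_zero, add_sub_cancel, sub_zero,
    div_one] at this
  linarith

theorem ConvexOn.add_inner_gradient_add_sq_le {K : ℝ≥0} (hK : 0 < K)
    (hconv : ConvexOn ℝ Set.univ f) (hf : Differentiable ℝ f) (hlip : LipschitzWith K (∇ f))
    (a b : E) : f a + ⟪∇ f a, b - a⟫ + ‖∇ f b - ∇ f a‖ ^ 2 / (2 * K) ≤ f b := by
  set w := ∇ f b - ∇ f a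
  -- `c` is the gradient step from `b` for `f - ⟪∇ f a, ·⟫`, a convex function minimised at `a`
  set c := b - (K : ℝ)⁻¹ • w
  have hlower := hconv.add_inner_gradient_le (hf a) c
  have hupper := le_add_inner_gradient_add_sq_of_lipschitzWith hf hlip b c
  have hca : c - a = (b - a) + (c - b) := by abel
  have hcb : c - b = -((K : ℝ)⁻¹ • w) := by simp only [c, sub_sub_cancel_left]
  rw [hca, inner_add_right] at hlower
  have hstep : ⟪∇ f b, c - b⟫ - ⟪∇ f a, c - b⟫ = -(K : ℝ)⁻¹ * ‖w‖ ^ 2 := by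
    rw [← inner_sub_left, hcb, inner_neg_right, real_inner_smul_right,
      real_inner_self_eq_norm_sq, neg_mul]
  have hsq : ‖c - b‖ ^ 2 = (K : ℝ)⁻¹ ^ 2 * ‖w‖ ^ 2 := by
    rw [hcb, norm_neg, norm_smul, mul_pow, Real.norm_eq_abs, sq_abs]
  rw [hsq] at hupper
  have hKr : (0 : ℝ) < K := hK
  have : ‖w‖ ^ 2 / (2 * K) = (K : ℝ)⁻¹ * ‖w‖ ^ 2 - K / 2 * ((K : ℝ)⁻¹ ^ 2 * ‖w‖ ^ 2) := by
    field_simp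
    ring
  linarith

theorem ConvexOn.norm_sq_sub_gradient_div_le_inner {K : ℝ≥0} (hK : 0 < K)
    (hconv : ConvexOn ℝ Set.univ f) (hf : Differentiable ℝ f) (hlip : LipschitzWith K (∇ f))
    (a b : E) : ‖∇ f a - ∇ f b‖ ^ 2 / K ≤ ⟪∇ f a - ∇ f b, a - b⟫ := by
  have hab := hconv.add_inner_gradient_add_sq_le hK hf hlip a b
  have hba := hconv.add_inner_gradient_add_sq_le hK hf hlip b a
  rw [norm_sub_rev] at hab
  have : ⟪∇ f a - ∇ f b, a - b⟫ = -⟪∇ f a, b - a⟫ - ⟪∇ f b, a - b⟫ := by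
    rw [inner_sub_left, ← neg_sub a b, inner_neg_right]
    ring
  have : ‖∇ f a - ∇ f b‖ ^ 2 / K = 2 * (‖∇ f a - ∇ f b‖ ^ 2 / (2 * K)) := by
    field_simp
  linarith

theorem sub_eq_smul_gradient_of_isMinOn {γ : ℝ} {x p : E} (hf : DifferentiableAt ℝ f p)
    (hmin : IsMinOn (fun y => γ * f y + ‖x - y‖ ^ 2 / 2) Set.univ p) :
    x - p = γ • ∇ f p := by
  set w := γ • ∇ f p - (x - p)
  have hloc : IsLocalMin (fun t : ℝ => γ * f (p + t • w) + ‖x - (p + t • w)‖ ^ 2 / 2) 0 := by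
    refine Filter.Eventually.of_forall fun t => ?_
    simpa using hmin (Set.mem_univ (p + t • w))
  have hfline : HasDerivAt (fun t : ℝ => f (p + t • w)) ⟪∇ f p, w⟫ 0 := by
    simpa using DifferentiableAt.hasDerivAt_comp_add_smul (v := w) (t := 0) (by simpa using hf)
  have hsqline : HasDerivAt (fun t : ℝ => ‖x - (p + t • w)‖ ^ 2) (2 * ⟪x - p, -w⟫) 0 := by
    simpa using ((((hasDerivAt_id (0 : ℝ)).smul_const w).const_add p).const_sub x).norm_sq
  have hzero := hloc.hasDerivAt_eq_zero ((hfline.const_mul γ).add (hsqline.div_const 2))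
  rw [inner_neg_right, ← real_inner_smul_left] at hzero
  have : ⟪w, w⟫ = 0 := by
    rw [inner_sub_left]
    linarith
  exact (sub_eq_zero.mp (inner_self_eq_zero.mp this)).symm

end

theorem prox_grad_map_cocoercive {d : ℕ} (L γ : ℝ) (hL : 0 < L) (hγ : 0 < γ)
    (f : EuclideanSpace ℝ (Fin d) → ℝ)
    (hconv : ConvexOn ℝ Set.univ f)
    (hdiff : Differentiable ℝ f)
    (hlip : LipschitzWith (Real.toNNReal L) (fun z => gradient f z))
    (x y px py : EuclideanSpace ℝ (Fin d))
    (hpx : IsProx γ f x px) (hpy : IsProx γ f y py) :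
    ⟪(1 / γ) • (x - px) - (1 / γ) • (y - py), x - y⟫ ≥
      γ * (1 + 1 / (L * γ)) * ‖(1 / γ) • (x - px) - (1 / γ) • (y - py)‖ ^ 2 := by
  have hx := sub_eq_smul_gradient_of_isMinOn (hdiff px) (isMinOn_univ_iff.2 hpx)
  have hy := sub_eq_smul_gradient_of_isMinOn (hdiff py) (isMinOn_univ_iff.2 hpy)
  have hco := hconv.norm_sq_sub_gradient_div_le_inner (Real.toNNReal_pos.2 hL) hdiff hlip px py
  rw [Real.coe_toNNReal L hL.le] at hco
  rw [hx, hy, smul_smul, smul_smul, one_div_mul_cancel hγ.ne', one_smul, one_smul]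
  set u := ∇ f px - ∇ f py
  have hxy : x - y = (px - py) + γ • u := by
    rw [smul_sub, ← hx, ← hy]
    abel
  calc γ * (1 + 1 / (L * γ)) * ‖u‖ ^ 2 = ‖u‖ ^ 2 / L + γ * ‖u‖ ^ 2 := by
        field_simp
        ring
    _ ≤ ⟪u, px - py⟫ + γ * ‖u‖ ^ 2 := by gcongr
    _ = ⟪u, x - y⟫ := by
        rw [hxy, inner_add_right, real_inner_smul_right, real_inner_self_eq_norm_sq]
end

section
/- Let j be a uniformly random index in {1,…,n}, and let g_1,…,g_n and g_1*,…,g_n* be fixed vectors in ℝ^d with Σ_{i=1}^n g_i* = 0. Let x, x* ∈ ℝ^d and γ > 0. Then E⟨γ[g_j - (1/n)Σ_i g_i] - γ g_j*, (x - x*) + γ[g_j - (1/n)Σ_i g_i] - γ g_j*⟩ ≤ γ² (1/n) Σ_{i=1}^n ‖g_i - g_i*‖². -/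
/-!
Write `a i = g i - gs i`. Since `∑ i, gs i = 0`, the vectors `g i` and `a i` have the same mean
`m`, so the `j`-th first argument is `v j = γ • (a j - m)`, and these sum to zero. Hence the
terms `⟪v j, x - xs⟫` cancel in the average, which leaves `γ ^ 2` times the average of
`‖a j - m‖ ^ 2`; a variance is at most the corresponding second moment.
-/

open RealInnerProductSpace Finset

section Mean

variable {ι E : Type*} [Fintype ι] [NormedAddCommGroup E] [InnerProductSpace ℝ E]

lemma sum_sub_card_inv_smul_sum (a : ι → E) :
    ∑ i, (a i - (Fintype.card ι : ℝ)⁻¹ • ∑ k, a k) = 0 := by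
  rcases isEmpty_or_nonempty ι with hι | hι
  · simp
  rw [sum_sub_distrib, sum_const, card_univ, ← Nat.cast_smul_eq_nsmul ℝ, smul_smul,
    mul_inv_cancel₀ (by positivity), one_smul, sub_self]

lemma sum_norm_sub_mean_sq (a : ι → E) :
    ∑ i, ‖a i - (Fintype.card ι : ℝ)⁻¹ • ∑ k, a k‖ ^ 2 =
      ∑ i, ‖a i‖ ^ 2 - Fintype.card ι * ‖(Fintype.card ι : ℝ)⁻¹ • ∑ k, a k‖ ^ 2 := by
  set m := (Fintype.card ι : ℝ)⁻¹ • ∑ k, a k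
  have hsum : ∑ i, a i = ∑ _i : ι, m := by
    simpa [sum_sub_distrib, sub_eq_zero] using sum_sub_card_inv_smul_sum a
  calc ∑ i, ‖a i - m‖ ^ 2
      = ∑ i, ‖a i‖ ^ 2 - 2 * ⟪∑ i, a i, m⟫ + ∑ _i : ι, ‖m‖ ^ 2 := by
        simp only [norm_sub_sq_real, sum_add_distrib, sum_sub_distrib, mul_sum, sum_inner]
    _ = ∑ i, ‖a i‖ ^ 2 - Fintype.card ι * ‖m‖ ^ 2 := by
        rw [hsum, sum_inner, real_inner_self_eq_norm_sq]
        simp only [sum_const, card_univ, nsmul_eq_mul]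
        ring

lemma sum_norm_sub_mean_sq_le (a : ι → E) :
    ∑ i, ‖a i - (Fintype.card ι : ℝ)⁻¹ • ∑ k, a k‖ ^ 2 ≤ ∑ i, ‖a i‖ ^ 2 := by
  rw [sum_norm_sub_mean_sq]
  exact sub_le_self _ (by positivity)

end Mean

lemma sum_inner_add_self_of_sum_eq_zero {ι E : Type*} [NormedAddCommGroup E]
    [InnerProductSpace ℝ E] (s : Finset ι) (v : ι → E) (hv : ∑ j ∈ s, v j = 0) (y : E) :
    ∑ j ∈ s, ⟪v j, y + v j⟫ = ∑ j ∈ s, ‖v j‖ ^ 2 := by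
  simp only [inner_add_right, sum_add_distrib, ← sum_inner, hv, inner_zero_left, zero_add,
    real_inner_self_eq_norm_sq]

theorem inner_product_bound_general {d n : ℕ} (γ : ℝ)
    (g gs : Fin n → EuclideanSpace ℝ (Fin d))
    (hsum : ∑ i, gs i = 0)
    (x xs : EuclideanSpace ℝ (Fin d)) :
    (1 / (n : ℝ)) * ∑ j,
        ⟪γ • (g j - (1 / (n : ℝ)) • ∑ i, g i) - γ • gs j,
          (x - xs) + γ • (g j - (1 / (n : ℝ)) • ∑ i, g i) - γ • gs j⟫ ≤
      γ ^ 2 * ((1 / (n : ℝ)) * ∑ i, ‖g i - gs i‖ ^ 2) := by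
  set a := fun i => g i - gs i
  have hmean : ∑ i, g i = ∑ i, a i := by simp [a, sum_sub_distrib, hsum]
  have hv (j : Fin n) : γ • (g j - (1 / (n : ℝ)) • ∑ i, g i) - γ • gs j =
      γ • (a j - (Fintype.card (Fin n) : ℝ)⁻¹ • ∑ i, a i) := by
    rw [hmean, Fintype.card_fin, one_div, ← smul_sub]
    congr 1
    simp only [a]
    abel
  have hv0 : ∑ j, γ • (a j - (Fintype.card (Fin n) : ℝ)⁻¹ • ∑ i, a i) = 0 := by
    rw [← smul_sum, sum_sub_card_inv_smul_sum, smul_zero]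
  simp only [add_sub_assoc, hv, sum_inner_add_self_of_sum_eq_zero _ _ hv0, norm_smul,
    mul_pow, Real.norm_eq_abs, sq_abs, ← mul_sum]
  rw [mul_left_comm]
  gcongr _ * (_ * ?_)
  exact sum_norm_sub_mean_sq_le a

theorem inner_product_bound {d n : ℕ} (hn : 0 < n) (γ : ℝ) (hγ : 0 < γ)
    (g gs : Fin n → EuclideanSpace ℝ (Fin d))
    (hsum : ∑ i, gs i = 0)
    (x xs : EuclideanSpace ℝ (Fin d)) :
    (1 / (n : ℝ)) * ∑ j,
        ⟪γ • (g j - (1 / (n : ℝ)) • ∑ i, g i) - γ • gs j,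
          (x - xs) + γ • (g j - (1 / (n : ℝ)) • ∑ i, g i) - γ • gs j⟫ ≤
      γ ^ 2 * ((1 / (n : ℝ)) * ∑ i, ‖g i - gs i‖ ^ 2) :=
  inner_product_bound_general γ g gs hsum x xs
end

section
/- Let 0 < μ < L, n ≥ 1 an integer, γ = √((n-1)² + 4nL/μ)/(2Ln) - (1 - 1/n)/(2L), c = 1/(μL), α = 1/(1+μγ), and κ = μγ/(1+μγ). Then αγ² + κc - c/n ≤ 0 and c/n - αγ² - αγ/L ≤ 0. -/
/-!
The step size `γ` is the positive root of `μ L n γ² + μ (n - 1) γ = 1`. With `c = 1 / (μ L)`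
one has `κ c = α γ / L`, so the two expressions are negatives of each other, and both equal
`± (μ L n γ² + μ (n - 1) γ - 1) / (μ L n (1 + μ γ)) = 0`: the conditions hold with equality.
-/

lemma quadratic_root_eq {a b d : ℝ} (ha : a ≠ 0) (hD : 0 ≤ b ^ 2 + 4 * a * d) :
    a * ((√(b ^ 2 + 4 * a * d) - b) / (2 * a)) ^ 2
      + b * ((√(b ^ 2 + 4 * a * d) - b) / (2 * a)) = d := by
  set s := √(b ^ 2 + 4 * a * d)
  have hs : s ^ 2 = b ^ 2 + 4 * a * d := Real.sq_sqrt hD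
  field_simp
  linear_combination hs

lemma quadratic_root_nonneg {a b d : ℝ} (ha : 0 < a) (hd : 0 ≤ d) :
    0 ≤ (√(b ^ 2 + 4 * a * d) - b) / (2 * a) := by
  have hb : |b| ≤ √(b ^ 2 + 4 * a * d) := Real.abs_le_sqrt (by nlinarith)
  exact div_nonneg (by linarith [le_abs_self b]) (by positivity)

theorem step_size_conditions (μ L : ℝ) (n : ℕ) (hμ : 0 < μ) (hμL : μ < L) (hn : 1 ≤ n)
    (γ c α κ : ℝ)
    (hγ : γ = Real.sqrt (((n : ℝ) - 1) ^ 2 + 4 * n * L / μ) / (2 * L * n)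
        - (1 - 1 / (n : ℝ)) / (2 * L))
    (hc : c = 1 / (μ * L))
    (hα : α = 1 / (1 + μ * γ))
    (hκ : κ = μ * γ / (1 + μ * γ)) :
    α * γ ^ 2 + κ * c - c / n ≤ 0 ∧ c / n - α * γ ^ 2 - α * γ / L ≤ 0 := by
  have hL : 0 < L := hμ.trans hμL
  have hLn : 0 < L * n := mul_pos hL (by exact_mod_cast hn)
  have hγ_root : γ = (√(((n : ℝ) - 1) ^ 2 + 4 * (L * n) * μ⁻¹) - (n - 1)) / (2 * (L * n)) := by
    rw [hγ]
    field_simp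
  have hquad : L * n * γ ^ 2 + (n - 1) * γ = μ⁻¹ := by
    rw [hγ_root]
    exact quadratic_root_eq hLn.ne' (by positivity)
  have hγ_nonneg : 0 ≤ γ := hγ_root ▸ quadratic_root_nonneg hLn (by positivity)
  have hden : 0 < 1 + μ * γ := by positivity
  have hfirst : α * γ ^ 2 + κ * c - c / n = 0 := by
    subst hc hα hκ
    field_simp
    linear_combination μ * hquad + mul_inv_cancel₀ hμ.ne'
  have hsecond : c / n - α * γ ^ 2 - α * γ / L = -(α * γ ^ 2 + κ * c - c / n) := by
    subst hc hα hκ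
    field_simp
    ring
  exact ⟨hfirst.le, by linarith⟩
end

section
/- Consider one step of Point-SAGA: given x^k ∈ ℝ^d and stored vectors g_1^k,…,g_n^k, pick j uniformly at random, set z_j^k = x^k + γ[g_j^k - (1/n)Σ_i g_i^k], x^{k+1} = prox_{γ f_j}(z_j^k), g_j^{k+1} = (1/γ)(z_j^k - x^{k+1}), and g_i^{k+1} = g_i^k for i ≠ j. Suppose each f_i : ℝ^d → ℝ is L-smooth and μ-strongly convex with 0 < μ < L. Define the Lyapunov function T^k = (c/n)Σ_{i=1}^n ‖g_i^k - g_i*‖² + ‖x^k - x*‖² with c = 1/(μL), where x* is the minimizer of f = (1/n)Σ_i f_i and g_i* = ∇f_i(x*) (so Σ_i g_i* = 0). Then with step size γ = √((n-1)² + 4nL/μ)/(2Ln) - (1 - 1/n)/(2L), the conditional expectation over the choice of j satisfies E[T^{k+1}] ≤ (1 - κ) T^k with κ = μγ/(1+μγ). -/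
open RealInnerProductSpace Finset

/-!
Since `g_j^{k+1} = ∇f_j(x^{k+1})` by the optimality condition of the proximal step, strong
monotonicity and cocoercivity of `∇f_j` make the step contractive:
`(1 + μγ)‖x^{k+1} - x*‖² + (γ² + γ/L)‖g_j^{k+1} - g_j*‖² ≤ ‖z_j - x* - γ g_j*‖²`.
Averaged over `j`, the SAGA correction has mean zero (as `Σ g_i* = 0`), so the right side is at
most `‖x^k - x*‖² + (γ²/n) Σ ‖g_i^k - g_i*‖²`. The step size is the positive root of
`μLnγ² + μ(n-1)γ = 1`, which is exactly what balances the weights `c/n` and `1` of the two parts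
of the Lyapunov function after multiplying by `1 + μγ`.
-/

open scoped Gradient NNReal

theorem ConvexOn.add_fderiv_sub_le {F : Type*} [NormedAddCommGroup F] [NormedSpace ℝ F]
    {s : Set F} {f : F → ℝ} {f' : F →L[ℝ] ℝ} {x y : F} (hf : ConvexOn ℝ s f)
    (hx : x ∈ s) (hy : y ∈ s) (hf' : HasFDerivAt f f' x) :
    f x + f' (y - x) ≤ f y := by
  have hline : HasDerivAt (f ∘ AffineMap.lineMap (k := ℝ) x y) (f' (y - x)) 0 := by
    refine HasFDerivAt.comp_hasDerivAt (0 : ℝ) ?_ AffineMap.hasDerivAt_lineMap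
    simpa using hf'
  have h := (hf.comp_affineMap (AffineMap.lineMap (k := ℝ) x y)).le_slope_of_hasDerivAt
    (by simpa using hx) (by simpa using hy) one_pos hline
  simp only [slope_def_field, Function.comp_apply, AffineMap.lineMap_apply_zero,
    AffineMap.lineMap_apply_one, sub_zero, div_one] at h
  linarith

section InnerProductSpace

variable {E : Type*} [NormedAddCommGroup E] [InnerProductSpace ℝ E]

theorem sum_norm_add_sub_average_sq_le {ι : Type*} [Fintype ι] (y : E) (w : ι → E) :
    ∑ j, ‖y + (w j - (Fintype.card ι : ℝ)⁻¹ • ∑ i, w i)‖ ^ 2 ≤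
      Fintype.card ι * ‖y‖ ^ 2 + ∑ j, ‖w j‖ ^ 2 := by
  rcases isEmpty_or_nonempty ι with hι | hι
  · simp
  set N : ℝ := (Fintype.card ι : ℝ)
  set m := N⁻¹ • ∑ i, w i
  have hN : N ≠ 0 := by simp [N, Fintype.card_ne_zero]
  have hsum : ∑ i, w i = N • m := by simp only [m, smul_smul, mul_inv_cancel₀ hN, one_smul]
  have hexpand : ∀ j, ‖y + (w j - m)‖ ^ 2 = ‖y - m‖ ^ 2 + 2 * ⟪y - m, w j⟫ + ‖w j‖ ^ 2 := by
    intro j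
    rw [← norm_add_sq_real]
    abel_nf
  calc ∑ j, ‖y + (w j - m)‖ ^ 2
      = N * ‖y - m‖ ^ 2 + 2 * ⟪y - m, ∑ i, w i⟫ + ∑ j, ‖w j‖ ^ 2 := by
        simp only [hexpand, sum_add_distrib, ← mul_sum, inner_sum, sum_const, card_univ,
          nsmul_eq_mul, N]
    _ = N * ‖y‖ ^ 2 + ∑ j, ‖w j‖ ^ 2 - N * ‖m‖ ^ 2 := by
        rw [hsum, real_inner_smul_right, norm_sub_sq_real, inner_sub_left,
          real_inner_self_eq_norm_sq, real_inner_comm]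
        ring
    _ ≤ N * ‖y‖ ^ 2 + ∑ j, ‖w j‖ ^ 2 := by
        have : 0 ≤ N := Nat.cast_nonneg _
        nlinarith [sq_nonneg ‖m‖]

theorem sum_norm_saga_step_sub_sq_le {n : ℕ} (γ : ℝ) (x xstar : E) (g gstar : Fin n → E)
    (hgstar : ∑ i, gstar i = 0) :
    ∑ j, ‖x + γ • (g j - (1 / (n : ℝ)) • ∑ i, g i) - xstar - γ • gstar j‖ ^ 2 ≤
      n * ‖x - xstar‖ ^ 2 + γ ^ 2 * ∑ j, ‖g j - gstar j‖ ^ 2 := by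
  have hcentered : ∀ j, x + γ • (g j - (1 / (n : ℝ)) • ∑ i, g i) - xstar - γ • gstar j =
      (x - xstar) + (γ • (g j - gstar j) -
        (Fintype.card (Fin n) : ℝ)⁻¹ • ∑ i, γ • (g i - gstar i)) := by
    intro j
    rw [← smul_sum, sum_sub_distrib, hgstar, sub_zero, Fintype.card_fin, ← one_div]
    module
  simp only [hcentered]
  refine (sum_norm_add_sub_average_sq_le _ _).trans_eq ?_
  simp only [norm_smul, mul_pow, Real.norm_eq_abs, sq_abs, ← mul_sum, Fintype.card_fin]

variable [CompleteSpace E] {f : E → ℝ} {x y : E}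

theorem StrongConvexOn.add_inner_gradient_add_le {s : Set E} {μ : ℝ}
    (hf : StrongConvexOn s μ f) (hx : x ∈ s) (hy : y ∈ s) (hfx : DifferentiableAt ℝ f x) :
    f x + ⟪∇ f x, y - x⟫ + μ / 2 * ‖y - x‖ ^ 2 ≤ f y := by
  have hd : HasFDerivAt (fun z => f z - μ / 2 * ‖z‖ ^ 2)
      (fderiv ℝ f x - (μ / 2) • (2 • innerSL ℝ x)) x :=
    hfx.hasFDerivAt.sub ((hasStrictFDerivAt_norm_sq x).hasFDerivAt.const_mul (μ / 2))
  have h := (strongConvexOn_iff_convex.mp hf).add_fderiv_sub_le hx hy hd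
  simp only [sub_apply, smul_apply, innerSL_apply_apply, ← inner_gradient_left] at h
  rw [norm_sub_sq_real]
  simp only [inner_sub_right, nsmul_eq_mul, Nat.cast_ofNat, smul_eq_mul,
    real_inner_self_eq_norm_sq] at h ⊢
  rw [real_inner_comm x y]
  nlinarith [h]

theorem StrongConvexOn.le_inner_gradient_sub {μ : ℝ} (hf : StrongConvexOn Set.univ μ f)
    (hd : Differentiable ℝ f) (x y : E) :
    μ * ‖x - y‖ ^ 2 ≤ ⟪∇ f x - ∇ f y, x - y⟫ := by
  have hxy := hf.add_inner_gradient_add_le trivial trivial (hd x) (y := y)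
  have hyx := hf.add_inner_gradient_add_le trivial trivial (hd y) (y := x)
  rw [norm_sub_rev y x] at hxy
  rw [← neg_sub x y, inner_neg_right] at hxy
  rw [inner_sub_left]
  linarith

theorem le_add_inner_gradient_add_of_lipschitzWith {K : ℝ≥0} (hd : Differentiable ℝ f)
    (hlip : LipschitzWith K (∇ f)) (x y : E) :
    f y ≤ f x + ⟪∇ f x, y - x⟫ + K / 2 * ‖y - x‖ ^ 2 := by
  set ℓ := AffineMap.lineMap (k := ℝ) x y
  set φ : ℝ → ℝ := fun t => f (ℓ t) - t * ⟪∇ f x, y - x⟫ - K / 2 * t ^ 2 * ‖y - x‖ ^ 2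
  have hφ' : ∀ t, HasDerivAt φ
      (⟪∇ f (ℓ t) - ∇ f x, y - x⟫ - K * t * ‖y - x‖ ^ 2) t := by
    intro t
    have hfℓ : HasDerivAt (fun s => f (ℓ s)) ⟪∇ f (ℓ t), y - x⟫ t := by
      rw [inner_gradient_left]
      exact (hd _).hasFDerivAt.comp_hasDerivAt t AffineMap.hasDerivAt_lineMap
    refine ((hfℓ.sub ((hasDerivAt_id t).mul_const _)).sub
      (((hasDerivAt_pow 2 t).const_mul (K / 2 : ℝ)).mul_const (‖y - x‖ ^ 2))).congr_deriv ?_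
    rw [inner_sub_left]
    ring
  have hφ'_nonpos : ∀ t ∈ interior (Set.Ici (0 : ℝ)),
      ⟪∇ f (ℓ t) - ∇ f x, y - x⟫ - K * t * ‖y - x‖ ^ 2 ≤ 0 := by
    intro t ht
    rw [interior_Ici, Set.mem_Ioi] at ht
    have hgrad : ‖∇ f (ℓ t) - ∇ f x‖ ≤ K * (t * ‖y - x‖) := by
      simpa [ℓ, ← dist_eq_norm, dist_lineMap_left, abs_of_pos ht, dist_comm x y] using
        hlip.dist_le_mul (ℓ t) x
    have := real_inner_le_norm (∇ f (ℓ t) - ∇ f x) (y - x)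
    nlinarith [norm_nonneg (y - x)]
  have hanti := antitoneOn_of_hasDerivWithinAt_nonpos (convex_Ici 0)
    (fun t _ => (hφ' t).continuousAt.continuousWithinAt)
    (fun t _ => (hφ' t).hasDerivWithinAt) hφ'_nonpos
  have h := hanti Set.self_mem_Ici (show (0 : ℝ) ≤ 1 from zero_le_one) zero_le_one
  simp only [φ, ℓ, AffineMap.lineMap_apply_zero, AffineMap.lineMap_apply_one] at h
  linarith

theorem ConvexOn.add_inner_gradient_add_le_of_lipschitzWith {K : ℝ≥0}
    (hf : ConvexOn ℝ Set.univ f) (hd : Differentiable ℝ f) (hlip : LipschitzWith K (∇ f))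
    (hK : 0 < K) (a b : E) :
    f a + ⟪∇ f a, b - a⟫ + 1 / (2 * K) * ‖∇ f b - ∇ f a‖ ^ 2 ≤ f b := by
  set D := ∇ f b - ∇ f a
  -- `w` is the gradient step from `b` for `f - ⟪∇ f a, ·⟫`, whose minimum is at `a`.
  set w := b - (K : ℝ)⁻¹ • D
  have hlower : f a + ⟪∇ f a, w - a⟫ ≤ f w := by
    rw [inner_gradient_left]
    exact hf.add_fderiv_sub_le trivial trivial (hd a).hasFDerivAt
  have hupper := le_add_inner_gradient_add_of_lipschitzWith hd hlip b w
  have hK' : (0 : ℝ) < K := hK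
  have hD : (K : ℝ)⁻¹ * ⟪∇ f b, D⟫ - (K : ℝ)⁻¹ * ⟪∇ f a, D⟫ = (K : ℝ)⁻¹ * ‖D‖ ^ 2 := by
    rw [← mul_sub, ← inner_sub_left, real_inner_self_eq_norm_sq]
  have hwa : w - a = (b - a) - (K : ℝ)⁻¹ • D := by simp only [w]; abel
  have hwb : w - b = -((K : ℝ)⁻¹ • D) := by simp only [w]; abel
  rw [hwa, inner_sub_right, real_inner_smul_right] at hlower
  rw [hwb, inner_neg_right, real_inner_smul_right, norm_neg, norm_smul, Real.norm_of_nonneg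
    (by positivity)] at hupper
  have : (K : ℝ)⁻¹ * ‖D‖ ^ 2 - K / 2 * ((K : ℝ)⁻¹ * ‖D‖) ^ 2 = 1 / (2 * K) * ‖D‖ ^ 2 := by
    field_simp; ring
  linarith

theorem ConvexOn.norm_gradient_sub_sq_le {K : ℝ≥0} (hf : ConvexOn ℝ Set.univ f)
    (hd : Differentiable ℝ f) (hlip : LipschitzWith K (∇ f)) (hK : 0 < K) (a b : E) :
    ‖∇ f a - ∇ f b‖ ^ 2 ≤ K * ⟪∇ f a - ∇ f b, a - b⟫ := by
  have hab := hf.add_inner_gradient_add_le_of_lipschitzWith hd hlip hK a b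
  have hba := hf.add_inner_gradient_add_le_of_lipschitzWith hd hlip hK b a
  rw [norm_sub_rev, ← neg_sub a b, inner_neg_right] at hab
  have hK' : (0 : ℝ) < K := hK
  have hsum : 2 * (1 / (2 * K)) * ‖∇ f a - ∇ f b‖ ^ 2 ≤ ⟪∇ f a - ∇ f b, a - b⟫ := by
    rw [inner_sub_left]
    linarith
  calc ‖∇ f a - ∇ f b‖ ^ 2 = K * (2 * (1 / (2 * K)) * ‖∇ f a - ∇ f b‖ ^ 2) := by field_simp
    _ ≤ K * ⟪∇ f a - ∇ f b, a - b⟫ := by gcongr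

theorem StrongConvexOn.proximal_step_contraction {μ γ : ℝ} {K : ℝ≥0}
    (hf : StrongConvexOn Set.univ μ f) (hμ : 0 ≤ μ) (hd : Differentiable ℝ f)
    (hlip : LipschitzWith K (∇ f)) (hK : 0 < K) (hγ : 0 ≤ γ) {v p : E}
    (hp : γ • ∇ f p = v - p) (x : E) :
    (1 + μ * γ) * ‖p - x‖ ^ 2 + (γ ^ 2 + γ / K) * ‖∇ f p - ∇ f x‖ ^ 2 ≤
      ‖v - x - γ • ∇ f x‖ ^ 2 := by
  have hmono := hf.le_inner_gradient_sub hd p x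
  have hconvex : ConvexOn ℝ Set.univ f :=
    hf.convexOn fun r => by simp only [Pi.zero_apply]; positivity
  have hcoco := hconvex.norm_gradient_sub_sq_le hd hlip hK p x
  have hv : v - x - γ • ∇ f x = (p - x) + γ • (∇ f p - ∇ f x) := by
    rw [smul_sub, hp]; abel
  have hK' : (0 : ℝ) < K := hK
  have hcoco' : γ / K * ‖∇ f p - ∇ f x‖ ^ 2 ≤ γ * ⟪∇ f p - ∇ f x, p - x⟫ := by
    rw [div_mul_eq_mul_div, div_le_iff₀ hK']
    nlinarith
  rw [hv, norm_add_sq_real, real_inner_smul_right, norm_smul, Real.norm_of_nonneg hγ,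
    real_inner_comm]
  nlinarith

theorem sum_gradient_eq_zero_of_isLocalMin {ι : Type*} [Fintype ι] {f : ι → E → ℝ}
    (hf : ∀ i, DifferentiableAt ℝ (f i) x) (hmin : IsLocalMin (fun y => ∑ i, f i y) x) :
    ∑ i, ∇ (f i) x = 0 := by
  have h0 := hmin.hasFDerivAt_eq_zero (HasFDerivAt.fun_sum fun i _ => (hf i).hasFDerivAt)
  simp only [gradient, ← map_sum, h0, map_zero]

end InnerProductSpace

theorem IsProx.smul_gradient_eq {d : ℕ} {γ : ℝ} {f : EuclideanSpace ℝ (Fin d) → ℝ}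
    {v p : EuclideanSpace ℝ (Fin d)} (hp : IsProx γ f v p) (hf : DifferentiableAt ℝ f p) :
    γ • ∇ f p = v - p := by
  have hmin : IsLocalMin (fun y => γ * f y + ‖v - y‖ ^ 2 / 2) p :=
    Filter.Eventually.of_forall hp
  have hsq : HasFDerivAt (fun y => ‖v - y‖ ^ 2)
      (2 • (innerSL ℝ (v - p)).comp (-ContinuousLinearMap.id ℝ _)) p :=
    ((hasFDerivAt_id p).const_sub v).norm_sq
  have hderiv : HasFDerivAt (fun y => γ * f y + ‖v - y‖ ^ 2 / 2)
      (InnerProductSpace.toDual ℝ _ (γ • ∇ f p - (v - p))) p := by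
    refine ((hf.hasFDerivAt.const_mul γ).add
      (by simpa only [← div_eq_mul_inv] using hsq.mul_const (2⁻¹ : ℝ))).congr_fderiv ?_
    ext w
    simp only [map_sub, map_smul, add_apply, smul_apply, sub_apply, neg_apply, smul_eq_mul,
      innerSL_apply_apply, ContinuousLinearMap.comp_neg, ContinuousLinearMap.comp_id,
      nsmul_eq_mul, Nat.cast_ofNat, toDual_gradient, InnerProductSpace.toDual_apply_apply]
    ring
  have h0 := hmin.hasFDerivAt_eq_zero hderiv
  rwa [LinearIsometryEquiv.map_eq_zero_iff, sub_eq_zero] at h0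

theorem sum_sum_eq_of_off_diag_eq {ι : Type*} [Fintype ι] {a : ι → ℝ} {b : ι → ι → ℝ}
    (h : ∀ j i, i ≠ j → b j i = a i) :
    ∑ j, ∑ i, b j i = ∑ j, b j j + ((Fintype.card ι : ℝ) - 1) * ∑ i, a i := by
  classical
  have hrow : ∀ j, ∑ i, b j i = b j j - a j + ∑ i, a i := by
    intro j
    rw [← add_sum_erase _ _ (mem_univ j), ← add_sum_erase _ a (mem_univ j),
      sum_congr rfl fun i hi => h j i (ne_of_mem_erase hi)]
    ring
  simp only [hrow, sum_add_distrib, sum_sub_distrib, sum_const, card_univ, nsmul_eq_mul]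
  ring

theorem quadratic_root_spec {A B C t : ℝ} (hA : 0 < A) (hC : 0 < C)
    (ht : t = (√(B ^ 2 + 4 * A * C) - B) / (2 * A)) : 0 < t ∧ A * t ^ 2 + B * t = C := by
  set s := √(B ^ 2 + 4 * A * C)
  have hsq : s ^ 2 = B ^ 2 + 4 * A * C := Real.sq_sqrt (by positivity)
  have hgt : B < s := Real.lt_sqrt_of_sq_lt (by nlinarith [mul_pos hA hC])
  subst ht
  refine ⟨div_pos (by linarith) (by positivity), ?_⟩
  field_simp
  linear_combination hsq

theorem pointSaga_stepSize_spec {n : ℕ} (hn : 0 < n) {μ L γ : ℝ} (hμ : 0 < μ) (hL : 0 < L)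
    (hγ : γ = Real.sqrt (((n : ℝ) - 1) ^ 2 + 4 * n * L / μ) / (2 * L * n)
        - (1 - 1 / (n : ℝ)) / (2 * L)) :
    0 < γ ∧ L * n * γ ^ 2 + (n - 1) * γ = 1 / μ := by
  have hn' : (0 : ℝ) < n := Nat.cast_pos.mpr hn
  refine quadratic_root_spec (by positivity) (by positivity) ?_
  rw [hγ, show 4 * (L * n) * (1 / μ) = 4 * n * L / μ by ring]
  field_simp

theorem lyapunov_contraction {n μ L γ c κ X D S U : ℝ} (hn : 0 < n) (hμ : 0 < μ) (hL : 0 < L)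
    (hγ : 0 < γ) (hquad : L * n * γ ^ 2 + (n - 1) * γ = 1 / μ) (hc : c = 1 / (μ * L))
    (hκ : κ = μ * γ / (1 + μ * γ))
    (hstep : (1 + μ * γ) * X + (γ ^ 2 + γ / L) * D ≤ n * U + γ ^ 2 * S) :
    1 / n * (c / n * (D + (n - 1) * S) + X) ≤ (1 - κ) * (c / n * S + U) := by
  have hβ : 0 < 1 + μ * γ := by positivity
  field_simp at hquad
  have hweight : (1 + μ * γ) * (c / n) = γ ^ 2 + γ / L := by
    rw [hc]; field_simp; linear_combination -hquad
  have hc' : (γ ^ 2 + γ / L) * (n - 1) + γ ^ 2 = c := by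
    rw [hc]; field_simp; linear_combination hquad
  have hmain : (1 + μ * γ) * (c / n * (D + (n - 1) * S) + X) ≤ n * (c / n * S + U) :=
    calc (1 + μ * γ) * (c / n * (D + (n - 1) * S) + X)
        = (γ ^ 2 + γ / L) * (n - 1) * S + ((1 + μ * γ) * X + (γ ^ 2 + γ / L) * D) := by
          rw [← hweight]; ring
      _ ≤ (γ ^ 2 + γ / L) * (n - 1) * S + (n * U + γ ^ 2 * S) := by gcongr
      _ = n * (c / n * S + U) := by rw [← hc']; field_simp; ring
  rw [hκ, one_sub_div hβ.ne', add_sub_cancel_right, one_div_mul_eq_div, one_div_mul_eq_div,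
    div_le_div_iff₀ hn hβ]
  linarith

theorem point_saga_lyapunov_descent {d n : ℕ} (hn : 0 < n) (μ L : ℝ)
    (hμ : 0 < μ) (hμL : μ < L)
    (f : Fin n → EuclideanSpace ℝ (Fin d) → ℝ)
    (hconv : ∀ i, StrongConvexOn Set.univ μ (f i))
    (hdiff : ∀ i, Differentiable ℝ (f i))
    (hlip : ∀ i, LipschitzWith (Real.toNNReal L) (fun z => gradient (f i) z))
    (xstar : EuclideanSpace ℝ (Fin d))
    (hmin : ∀ y, (1 / (n : ℝ)) * ∑ i, f i xstar ≤ (1 / (n : ℝ)) * ∑ i, f i y)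
    (gstar : Fin n → EuclideanSpace ℝ (Fin d))
    (hgstar : ∀ i, gstar i = gradient (f i) xstar)
    (γ c κ : ℝ)
    (hγ : γ = Real.sqrt (((n : ℝ) - 1) ^ 2 + 4 * n * L / μ) / (2 * L * n)
        - (1 - 1 / (n : ℝ)) / (2 * L))
    (hc : c = 1 / (μ * L))
    (hκ : κ = μ * γ / (1 + μ * γ))
    (xk : EuclideanSpace ℝ (Fin d)) (gk : Fin n → EuclideanSpace ℝ (Fin d))
    (z : Fin n → EuclideanSpace ℝ (Fin d))
    (hz : ∀ j, z j = xk + γ • (gk j - (1 / (n : ℝ)) • ∑ i, gk i))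
    (xk1 : Fin n → EuclideanSpace ℝ (Fin d))
    (hxk1 : ∀ j, IsProx γ (f j) (z j) (xk1 j))
    (gk1 : Fin n → Fin n → EuclideanSpace ℝ (Fin d))
    (hgk1 : ∀ j, gk1 j j = (1 / γ) • (z j - xk1 j))
    (hgk1' : ∀ j i, i ≠ j → gk1 j i = gk i) :
    (1 / (n : ℝ)) * ∑ j,
        ((c / n) * ∑ i, ‖gk1 j i - gstar i‖ ^ 2 + ‖xk1 j - xstar‖ ^ 2) ≤
      (1 - κ) * ((c / n) * ∑ i, ‖gk i - gstar i‖ ^ 2 + ‖xk - xstar‖ ^ 2) := by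
  have hL : 0 < L := hμ.trans hμL
  have hK : 0 < L.toNNReal := Real.toNNReal_pos.mpr hL
  obtain ⟨hγpos, hquad⟩ := pointSaga_stepSize_spec hn hμ hL hγ
  have hprox : ∀ j, γ • ∇ (f j) (xk1 j) = z j - xk1 j := fun j =>
    (hxk1 j).smul_gradient_eq (hdiff j _)
  have hgrad : ∀ j, gk1 j j = ∇ (f j) (xk1 j) := fun j => by
    rw [hgk1, ← hprox, smul_smul, one_div, inv_mul_cancel₀ hγpos.ne', one_smul]
  have hsumstar : ∑ i, gstar i = 0 := by
    simp only [hgstar]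
    exact sum_gradient_eq_zero_of_isLocalMin (fun i => hdiff i xstar)
      (Filter.Eventually.of_forall fun y => le_of_mul_le_mul_left (hmin y) (by positivity))
  have hcontr : ∀ j, (1 + μ * γ) * ‖xk1 j - xstar‖ ^ 2 + (γ ^ 2 + γ / L) * ‖gk1 j j - gstar j‖ ^ 2
      ≤ ‖z j - xstar - γ • gstar j‖ ^ 2 := fun j => by
    simpa only [hgrad, hgstar, Real.coe_toNNReal _ hL.le] using
      (hconv j).proximal_step_contraction hμ.le (hdiff j) (hlip j) hK hγpos.le (hprox j) xstar
  rw [sum_add_distrib, ← mul_sum, sum_sum_eq_of_off_diag_eq (a := fun i => ‖gk i - gstar i‖ ^ 2)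
    fun j i hij => by rw [hgk1' j i hij], Fintype.card_fin]
  have hstep := sum_le_sum fun j (_ : j ∈ univ) => hcontr j
  rw [sum_add_distrib, ← mul_sum, ← mul_sum] at hstep
  simp only [hz] at hstep
  exact lyapunov_contraction (by positivity) hμ hL hγpos hquad hc hκ
    (hstep.trans (sum_norm_saga_step_sub_sq_le γ xk xstar gk gstar hsumstar))
end

section
/- Suppose each f_i : ℝ^d → ℝ is μ-strongly convex (possibly non-smooth), ‖g_i^0 - g_i*‖ ≤ B for all i, and ‖x^0 - x*‖ ≤ R. Run Point-SAGA with step size γ = R/(B√n). Then the averaged iterate x̄^k = (1/k)Σ_{t=1}^k x^t satisfies E‖x̄^k - x*‖² ≤ 2√n(1 + μR/(B√n))/(μk) · RB. -/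
/-!
The potential `T = ‖x - x⋆‖² + γ² ∑ᵢ ‖gᵢ - gᵢ⋆‖²` drops in conditional expectation by at least
`2γμ ‖x⁺ - x⋆‖²` per step. The proximal step makes the new table entry `g⁺ⱼ = (z - x⁺) / γ` a
subgradient of `fⱼ` at `x⁺`, so `(x - x⋆) + γ (gⱼ - gⱼ⋆ - ḡ) = (x⁺ - x⋆) + γ (g⁺ⱼ - gⱼ⋆)` has squared
norm at least `(1 + 2γμ) ‖x⁺ - x⋆‖² + γ² ‖g⁺ⱼ - gⱼ⋆‖²` by strong monotonicity. Averaged over `j`,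
subtracting `ḡ`, which is the mean of the `gᵢ - gᵢ⋆` because `∑ᵢ gᵢ⋆ = 0`, only lowers their second
moment. Summing over the steps, the expected `∑ₜ ‖xᵗ - x⋆‖²` is at most `T⁰ / (2γμ) ≤ R² / (γμ)`,
and Jensen's inequality bounds the averaged iterate by `R² / (γμk) = √n R B / (μk)`.
-/

open RealInnerProductSpace Finset

/-- `g` is a subgradient of `f` at `x`. -/
def IsSubgradient {d : ℕ} (f : EuclideanSpace ℝ (Fin d) → ℝ)
    (x g : EuclideanSpace ℝ (Fin d)) : Prop :=
  ∀ y, f x + ⟪g, y - x⟫ ≤ f y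

open Filter Topology Set in
theorem le_of_forall_mul_le_mul_add_sq {a b c : ℝ}
    (h : ∀ t : ℝ, 0 < t → t < 1 → t * a ≤ t * b + t ^ 2 * c) : a ≤ b := by
  have hlim : Tendsto (fun t : ℝ => b + t * c) (𝓝[>] 0) (𝓝 b) := by
    have hcont : Continuous fun t : ℝ => b + t * c := by fun_prop
    exact (hcont.tendsto' 0 b (by simp)).mono_left nhdsWithin_le_nhds
  refine ge_of_tendsto hlim ?_
  filter_upwards [Ioo_mem_nhdsGT one_pos] with t ⟨ht0, ht1⟩
  exact le_of_mul_le_mul_left (by linarith [h t ht0 ht1]) ht0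

section ConvexAnalysis

variable {d : ℕ} {f : EuclideanSpace ℝ (Fin d) → ℝ}

theorem IsSubgradient.add_half_mul_norm_sq_le {μ : ℝ} (hf : StrongConvexOn Set.univ μ f)
    {x g : EuclideanSpace ℝ (Fin d)} (hg : IsSubgradient f x g) (y : EuclideanSpace ℝ (Fin d)) :
    f x + ⟪g, y - x⟫ + μ / 2 * ‖y - x‖ ^ 2 ≤ f y := by
  refine le_of_forall_mul_le_mul_add_sq (c := μ / 2 * ‖y - x‖ ^ 2) fun t ht0 ht1 => ?_
  have hsub := hg ((1 - t) • x + t • y)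
  have hconv := hf.2 (Set.mem_univ x) (Set.mem_univ y) (sub_nonneg.2 ht1.le) ht0.le (by ring)
  rw [show (1 - t) • x + t • y - x = t • (y - x) by module, real_inner_smul_right] at hsub
  rw [norm_sub_rev, smul_eq_mul, smul_eq_mul] at hconv
  linarith

theorem IsSubgradient.mul_norm_sub_sq_le_inner {μ : ℝ} (hf : StrongConvexOn Set.univ μ f)
    {x y g h : EuclideanSpace ℝ (Fin d)} (hx : IsSubgradient f x g) (hy : IsSubgradient f y h) :
    μ * ‖x - y‖ ^ 2 ≤ ⟪g - h, x - y⟫ := by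
  have hxy := hx.add_half_mul_norm_sq_le hf y
  have hyx := hy.add_half_mul_norm_sq_le hf x
  rw [norm_sub_rev] at hxy
  rw [inner_sub_left, ← neg_sub x y, inner_neg_right] at *
  linarith

theorem IsProx.isSubgradient {γ : ℝ} (hγ : 0 < γ) (hf : ConvexOn ℝ Set.univ f)
    {z p : EuclideanSpace ℝ (Fin d)} (hp : IsProx γ f z p) :
    IsSubgradient f p ((1 / γ) • (z - p)) := by
  intro y
  suffices γ * f p + ⟪z - p, y - p⟫ ≤ γ * f y by
    rw [real_inner_smul_left, one_div, ← mul_le_mul_iff_of_pos_left hγ, mul_add,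
      ← mul_assoc, mul_inv_cancel₀ hγ.ne', one_mul]
    exact this
  refine le_of_forall_mul_le_mul_add_sq (c := ‖y - p‖ ^ 2 / 2) fun t ht0 ht1 => ?_
  have hprox := hp ((1 - t) • p + t • y)
  have hconv := hf.2 (Set.mem_univ p) (Set.mem_univ y) (sub_nonneg.2 ht1.le) ht0.le (by ring)
  rw [smul_eq_mul, smul_eq_mul] at hconv
  rw [show z - ((1 - t) • p + t • y) = (z - p) - t • (y - p) by module, norm_sub_sq_real (z - p),
    real_inner_smul_right, norm_smul, Real.norm_of_nonneg ht0.le] at hprox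
  nlinarith [mul_le_mul_of_nonneg_left hconv hγ.le]

end ConvexAnalysis

theorem sum_norm_add_smul_sub_sq_le {ι E : Type*} [Fintype ι] [NormedAddCommGroup E]
    [InnerProductSpace ℝ E] {u : ι → E} {m : E} (hm : ∑ i, u i = (Fintype.card ι : ℝ) • m)
    (c : E) (γ : ℝ) :
    ∑ j, ‖c + γ • (u j - m)‖ ^ 2 ≤ Fintype.card ι * ‖c‖ ^ 2 + γ ^ 2 * ∑ j, ‖u j‖ ^ 2 := by
  have hexpand : ∀ j, ‖c + γ • (u j - m)‖ ^ 2 = ‖c‖ ^ 2 + γ ^ 2 * ‖u j‖ ^ 2 +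
      (2 * γ * ⟪c, u j⟫ - 2 * γ * ⟪c, m⟫ - 2 * γ ^ 2 * ⟪u j, m⟫ + γ ^ 2 * ‖m‖ ^ 2) := by
    intro j
    rw [norm_add_sq_real, norm_smul, mul_pow, Real.norm_eq_abs, sq_abs, norm_sub_sq_real,
      real_inner_smul_right, inner_sub_right]
    ring
  have hcross : ∑ j, (2 * γ * ⟪c, u j⟫ - 2 * γ * ⟪c, m⟫ - 2 * γ ^ 2 * ⟪u j, m⟫ + γ ^ 2 * ‖m‖ ^ 2)
      = -(Fintype.card ι * γ ^ 2 * ‖m‖ ^ 2) := by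
    simp only [sum_add_distrib, sum_sub_distrib, ← mul_sum, sum_const, card_univ, nsmul_eq_mul]
    rw [← inner_sum, ← sum_inner, hm, real_inner_smul_right, real_inner_smul_left,
      real_inner_self_eq_norm_sq]
    ring
  rw [sum_congr rfl fun j _ => hexpand j, sum_add_distrib, sum_add_distrib, hcross, sum_const,
    card_univ, nsmul_eq_mul, ← mul_sum]
  linarith [show 0 ≤ (Fintype.card ι : ℝ) * γ ^ 2 * ‖m‖ ^ 2 by positivity]

theorem norm_sq_average_sub_le {ι E : Type*} [NormedAddCommGroup E] [NormedSpace ℝ E]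
    {s : Finset ι} (hs : s.Nonempty) (v : ι → E) (a : E) :
    ‖(1 / (#s : ℝ)) • ∑ t ∈ s, v t - a‖ ^ 2 ≤ (1 / (#s : ℝ)) * ∑ t ∈ s, ‖v t - a‖ ^ 2 := by
  have hs' : (0 : ℝ) < #s := by exact_mod_cast hs.card_pos
  have hcenter : (1 / (#s : ℝ)) • ∑ t ∈ s, v t - a = (1 / (#s : ℝ)) • ∑ t ∈ s, (v t - a) := by
    rw [sum_sub_distrib, sum_const, ← Nat.cast_smul_eq_nsmul ℝ, smul_sub, smul_smul,
      one_div_mul_cancel hs'.ne', one_smul]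
  have hcs : ‖∑ t ∈ s, (v t - a)‖ ^ 2 ≤ #s * ∑ t ∈ s, ‖v t - a‖ ^ 2 :=
    (pow_le_pow_left₀ (norm_nonneg _) (norm_sum_le _ _) 2).trans sq_sum_le_card_mul_sum_sq
  rw [hcenter, norm_smul, mul_pow, Real.norm_of_nonneg (by positivity)]
  calc _ ≤ (1 / (#s : ℝ)) ^ 2 * (#s * ∑ t ∈ s, ‖v t - a‖ ^ 2) := by gcongr
    _ = _ := by field_simp

theorem List.ofFn_snoc {α : Type*} {m : ℕ} (ω : Fin m → α) (a : α) :
    List.ofFn (Fin.snoc ω a : Fin (m + 1) → α) = List.ofFn ω ++ [a] := by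
  rw [List.ofFn_succ']
  simp

theorem sum_sum_take_add_le_card_pow_mul {α : Type*} [Fintype α] (c V : List α → ℝ)
    (hV : ∀ p, ∑ a, (c (p ++ [a]) + V (p ++ [a])) ≤ Fintype.card α * V p) (m : ℕ) :
    ∑ ω : Fin m → α, (∑ t ∈ Icc 1 m, c ((List.ofFn ω).take t) + V (List.ofFn ω)) ≤
      (Fintype.card α : ℝ) ^ m * V [] := by
  induction m with
  | zero => simp
  | succ m ih =>
    have hsplit : ∀ (ω : Fin m → α) (a : α),
        ∑ t ∈ Icc 1 (m + 1), c ((List.ofFn ω ++ [a]).take t) =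
          ∑ t ∈ Icc 1 m, c ((List.ofFn ω).take t) + c (List.ofFn ω ++ [a]) := by
      intro ω a
      rw [sum_Icc_succ_top (by omega), List.take_of_length_le (by simp)]
      congr 1
      refine sum_congr rfl fun t ht => ?_
      rw [List.take_append_of_le_length (by simp [(mem_Icc.1 ht).2])]
    calc ∑ ω : Fin (m + 1) → α, (∑ t ∈ Icc 1 (m + 1), c ((List.ofFn ω).take t) + V (List.ofFn ω))
        = ∑ ω : Fin m → α, ((Fintype.card α : ℝ) * ∑ t ∈ Icc 1 m, c ((List.ofFn ω).take t) +
            ∑ a, (c (List.ofFn ω ++ [a]) + V (List.ofFn ω ++ [a]))) := by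
          rw [← (Fin.snocEquiv fun _ => α).sum_comp, Fintype.sum_prod_type, sum_comm]
          refine sum_congr rfl fun ω _ => ?_
          simp only [Fin.snocEquiv, Equiv.coe_fn_mk, List.ofFn_snoc, hsplit, sum_add_distrib,
            sum_const, card_univ, nsmul_eq_mul, add_assoc]
      _ ≤ ∑ ω : Fin m → α, (Fintype.card α : ℝ) *
            (∑ t ∈ Icc 1 m, c ((List.ofFn ω).take t) + V (List.ofFn ω)) := by
          gcongr with ω
          rw [mul_add]
          exact add_le_add le_rfl (hV _)
      _ ≤ (Fintype.card α : ℝ) ^ (m + 1) * V [] := by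
          rw [← mul_sum, pow_succ', mul_assoc]
          gcongr

def sagaLyapunov {ι E : Type*} [Fintype ι] [NormedAddCommGroup E] (γ : ℝ) (xstar : E)
    (gstar : ι → E) (x : E) (g : ι → E) : ℝ :=
  ‖x - xstar‖ ^ 2 + γ ^ 2 * ∑ i, ‖g i - gstar i‖ ^ 2

theorem sagaLyapunov_nonneg {ι E : Type*} [Fintype ι] [NormedAddCommGroup E] {γ : ℝ}
    {xstar x : E} {gstar g : ι → E} : 0 ≤ sagaLyapunov γ xstar gstar x g := by
  unfold sagaLyapunov
  positivity

theorem sagaLyapunov_le {ι E : Type*} [Fintype ι] [NormedAddCommGroup E] {γ R B : ℝ}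
    {xstar x : E} {gstar g : ι → E} (hx : ‖x - xstar‖ ≤ R) (hg : ∀ i, ‖g i - gstar i‖ ≤ B) :
    sagaLyapunov γ xstar gstar x g ≤ R ^ 2 + γ ^ 2 * (Fintype.card ι * B ^ 2) := by
  have hsum : ∑ i, ‖g i - gstar i‖ ^ 2 ≤ Fintype.card ι * B ^ 2 := by
    simpa using sum_le_sum fun i (_ : i ∈ univ) => pow_le_pow_left₀ (norm_nonneg _) (hg i) 2
  rw [sagaLyapunov]
  gcongr

section PointSAGA

variable {d n : ℕ} {μ γ : ℝ} {f : Fin n → EuclideanSpace ℝ (Fin d) → ℝ}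
  {xstar : EuclideanSpace ℝ (Fin d)} {gstar : Fin n → EuclideanSpace ℝ (Fin d)}

structure IsPointSAGATrajectory (γ : ℝ) (f : Fin n → EuclideanSpace ℝ (Fin d) → ℝ)
    (X : List (Fin n) → EuclideanSpace ℝ (Fin d))
    (G : List (Fin n) → Fin n → EuclideanSpace ℝ (Fin d)) : Prop where
  prox : ∀ (p : List (Fin n)) (j : Fin n),
    IsProx γ (f j) (X p + γ • (G p j - (1 / (n : ℝ)) • ∑ i, G p i)) (X (p ++ [j]))
  table_update : ∀ (p : List (Fin n)) (j : Fin n),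
    G (p ++ [j]) j = (1 / γ) • ((X p + γ • (G p j - (1 / (n : ℝ)) • ∑ i, G p i)) - X (p ++ [j]))
  table_of_ne : ∀ (p : List (Fin n)) (j i : Fin n), i ≠ j → G (p ++ [j]) i = G p i

theorem pointSAGA_step_le (hγ : 0 < γ) (hconv : ∀ i, StrongConvexOn Set.univ μ (f i))
    (hμ : 0 ≤ μ) (hgstar : ∀ i, IsSubgradient (f i) xstar (gstar i))
    {x x' : EuclideanSpace ℝ (Fin d)} {g g' : Fin n → EuclideanSpace ℝ (Fin d)} {j : Fin n}
    (hprox : IsProx γ (f j) (x + γ • (g j - (1 / (n : ℝ)) • ∑ i, g i)) x')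
    (hg'j : g' j = (1 / γ) • ((x + γ • (g j - (1 / (n : ℝ)) • ∑ i, g i)) - x'))
    (hg' : ∀ i, i ≠ j → g' i = g i) :
    2 * γ * μ * ‖x' - xstar‖ ^ 2 + sagaLyapunov γ xstar gstar x' g' ≤
      ‖(x - xstar) + γ • ((g j - gstar j) - (1 / (n : ℝ)) • ∑ i, g i)‖ ^ 2 +
        γ ^ 2 * (∑ i, ‖g i - gstar i‖ ^ 2 - ‖g j - gstar j‖ ^ 2) := by
  have hsub : IsSubgradient (f j) x' (g' j) :=
    hg'j ▸ hprox.isSubgradient hγ (strongConvexOn_zero.1 ((hconv j).mono hμ))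
  have hmono := hsub.mul_norm_sub_sq_le_inner (hconv j) (hgstar j)
  have hshift : (x - xstar) + γ • ((g j - gstar j) - (1 / (n : ℝ)) • ∑ i, g i) =
      (x' - xstar) + γ • (g' j - gstar j) := by
    rw [hg'j, smul_sub γ _ (gstar j), smul_smul, mul_one_div_cancel hγ.ne', one_smul]
    module
  have htable : ∑ i, ‖g' i - gstar i‖ ^ 2 =
      ∑ i, ‖g i - gstar i‖ ^ 2 - ‖g j - gstar j‖ ^ 2 + ‖g' j - gstar j‖ ^ 2 := by
    rw [← add_sum_erase _ _ (mem_univ j), ← add_sum_erase _ _ (mem_univ j),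
      sum_congr rfl fun i hi => by rw [hg' i (ne_of_mem_erase hi)]]
    ring
  rw [hshift, norm_add_sq_real, real_inner_smul_right, norm_smul, mul_pow, Real.norm_eq_abs,
    sq_abs, sagaLyapunov, htable, real_inner_comm]
  nlinarith [mul_le_mul_of_nonneg_left hmono (by positivity : (0 : ℝ) ≤ 2 * γ)]

namespace IsPointSAGATrajectory

variable {X : List (Fin n) → EuclideanSpace ℝ (Fin d)}
  {G : List (Fin n) → Fin n → EuclideanSpace ℝ (Fin d)}

theorem sum_lyapunov_succ_le (hrun : IsPointSAGATrajectory γ f X G) (hn : 0 < n) (hγ : 0 < γ)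
    (hμ : 0 ≤ μ) (hconv : ∀ i, StrongConvexOn Set.univ μ (f i))
    (hgstar : ∀ i, IsSubgradient (f i) xstar (gstar i)) (hgsum : ∑ i, gstar i = 0)
    (p : List (Fin n)) :
    ∑ j, (2 * γ * μ * ‖X (p ++ [j]) - xstar‖ ^ 2 +
        sagaLyapunov γ xstar gstar (X (p ++ [j])) (G (p ++ [j]))) ≤
      n * sagaLyapunov γ xstar gstar (X p) (G p) := by
  set S := ∑ i, ‖G p i - gstar i‖ ^ 2
  have hmean :
      ∑ i, (G p i - gstar i) = (Fintype.card (Fin n) : ℝ) • (1 / (n : ℝ)) • ∑ i, G p i := by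
    rw [sum_sub_distrib, hgsum, sub_zero, Fintype.card_fin, smul_smul,
      mul_one_div_cancel (Nat.cast_ne_zero.2 hn.ne'), one_smul]
  calc _ ≤ ∑ j, (‖(X p - xstar) + γ • ((G p j - gstar j) - (1 / (n : ℝ)) • ∑ i, G p i)‖ ^ 2 +
          γ ^ 2 * (S - ‖G p j - gstar j‖ ^ 2)) :=
        sum_le_sum fun j _ => pointSAGA_step_le hγ hconv hμ hgstar (hrun.prox p j)
          (hrun.table_update p j) (hrun.table_of_ne p j)
    _ = ∑ j, ‖(X p - xstar) + γ • ((G p j - gstar j) - (1 / (n : ℝ)) • ∑ i, G p i)‖ ^ 2 +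
          γ ^ 2 * (n * S - S) := by
        rw [sum_add_distrib, ← mul_sum, sum_sub_distrib, sum_const, card_univ, Fintype.card_fin,
          nsmul_eq_mul]
    _ ≤ n * ‖X p - xstar‖ ^ 2 + γ ^ 2 * S + γ ^ 2 * (n * S - S) := by
        gcongr
        simpa using sum_norm_add_smul_sub_sq_le hmean (X p - xstar) γ
    _ = n * sagaLyapunov γ xstar gstar (X p) (G p) := by
        rw [sagaLyapunov]
        ring

theorem sum_sum_sq_dist_le (hrun : IsPointSAGATrajectory γ f X G) (hn : 0 < n) (hγ : 0 < γ)
    (hμ : 0 ≤ μ) (hconv : ∀ i, StrongConvexOn Set.univ μ (f i))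
    (hgstar : ∀ i, IsSubgradient (f i) xstar (gstar i)) (hgsum : ∑ i, gstar i = 0) (k : ℕ) :
    2 * γ * μ * ∑ ω : Fin k → Fin n, ∑ t ∈ Icc 1 k, ‖X ((List.ofFn ω).take t) - xstar‖ ^ 2 ≤
      n ^ k * sagaLyapunov γ xstar gstar (X []) (G []) := by
  have hdesc := hrun.sum_lyapunov_succ_le hn hγ hμ hconv hgstar hgsum
  calc _ = ∑ ω : Fin k → Fin n,
          ∑ t ∈ Icc 1 k, 2 * γ * μ * ‖X ((List.ofFn ω).take t) - xstar‖ ^ 2 := by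
        simp only [mul_sum]
    _ ≤ ∑ ω : Fin k → Fin n,
          (∑ t ∈ Icc 1 k, 2 * γ * μ * ‖X ((List.ofFn ω).take t) - xstar‖ ^ 2 +
            sagaLyapunov γ xstar gstar (X (List.ofFn ω)) (G (List.ofFn ω))) :=
        sum_le_sum fun ω _ => le_add_of_nonneg_right sagaLyapunov_nonneg
    _ ≤ n ^ k * sagaLyapunov γ xstar gstar (X []) (G []) := by
        simpa using sum_sum_take_add_le_card_pow_mul (fun p => 2 * γ * μ * ‖X p - xstar‖ ^ 2)
          (fun p => sagaLyapunov γ xstar gstar (X p) (G p))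
          (by simpa only [Fintype.card_fin] using hdesc) k

end IsPointSAGATrajectory

end PointSAGA

theorem point_saga_nonsmooth_rate_general {d n : ℕ} (hn : 0 < n) (μ B R : ℝ)
    (hμ : 0 < μ) (hB : 0 < B) (hR : 0 < R)
    (f : Fin n → EuclideanSpace ℝ (Fin d) → ℝ)
    (hconv : ∀ i, StrongConvexOn Set.univ μ (f i))
    (xstar : EuclideanSpace ℝ (Fin d))
    (gstar : Fin n → EuclideanSpace ℝ (Fin d))
    (hgstar : ∀ i, IsSubgradient (f i) xstar (gstar i))
    (hgsum : ∑ i, gstar i = 0)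
    (γ : ℝ) (hγ : γ = R / (B * Real.sqrt n))
    (x0 : EuclideanSpace ℝ (Fin d)) (g0 : Fin n → EuclideanSpace ℝ (Fin d))
    (hg0B : ∀ i, ‖g0 i - gstar i‖ ≤ B)
    (hx0R : ‖x0 - xstar‖ ≤ R)
    -- the iterates and gradient tables, indexed by the history of sampled indices
    (X : List (Fin n) → EuclideanSpace ℝ (Fin d))
    (G : List (Fin n) → Fin n → EuclideanSpace ℝ (Fin d))
    (hX0 : X [] = x0) (hG0 : ∀ i, G [] i = g0 i)
    (hstep : ∀ (p : List (Fin n)) (j : Fin n),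
      IsProx γ (f j) (X p + γ • (G p j - (1 / (n : ℝ)) • ∑ i, G p i)) (X (p ++ [j])))
    (hupd : ∀ (p : List (Fin n)) (j : Fin n),
      G (p ++ [j]) j = (1 / γ) •
        ((X p + γ • (G p j - (1 / (n : ℝ)) • ∑ i, G p i)) - X (p ++ [j])))
    (hupd' : ∀ (p : List (Fin n)) (j i : Fin n), i ≠ j → G (p ++ [j]) i = G p i)
    (k : ℕ) (hk : 0 < k) :
    (1 / (n : ℝ) ^ k) * ∑ ω : Fin k → Fin n,
        ‖(1 / (k : ℝ)) • ∑ t ∈ Finset.Icc 1 k, X ((List.ofFn ω).take t) - xstar‖ ^ 2 ≤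
      2 * (Real.sqrt n * (1 + μ * (R / (B * Real.sqrt n)))) / (μ * k) * (R * B) := by
  have hsn : 0 < Real.sqrt n := Real.sqrt_pos.2 (Nat.cast_pos.2 hn)
  have hγ0 : 0 < γ := by rw [hγ]; positivity
  have hγB : γ ^ 2 * (n * B ^ 2) = R ^ 2 := by
    rw [hγ, div_pow, mul_pow, Real.sq_sqrt (Nat.cast_nonneg n)]
    field_simp
  have hT0 : sagaLyapunov γ xstar gstar (X []) (G []) ≤ 2 * R ^ 2 := by
    have h := sagaLyapunov_le (γ := γ) (hX0 ▸ hx0R) fun i => hG0 i ▸ hg0B i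
    rw [Fintype.card_fin, hγB] at h
    linarith
  set D : (Fin k → Fin n) → ℝ := fun ω => ∑ t ∈ Icc 1 k, ‖X ((List.ofFn ω).take t) - xstar‖ ^ 2
  have hD : 2 * γ * μ * ∑ ω, D ω ≤ n ^ k * (2 * R ^ 2) :=
    (IsPointSAGATrajectory.mk hstep hupd hupd').sum_sum_sq_dist_le hn hγ0 hμ.le hconv hgstar
      hgsum k |>.trans (by gcongr)
  have hIcc : (Icc 1 k).Nonempty := ⟨1, mem_Icc.2 ⟨le_rfl, hk⟩⟩
  calc _ ≤ (1 / (n : ℝ) ^ k) * ∑ ω, (1 / (k : ℝ)) * D ω := by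
        gcongr with ω
        simpa using norm_sq_average_sub_le hIcc (fun t => X ((List.ofFn ω).take t)) xstar
    _ = 1 / (2 * γ * μ * n ^ k * k) * (2 * γ * μ * ∑ ω, D ω) := by
        rw [← mul_sum]
        field_simp
    _ ≤ 1 / (2 * γ * μ * n ^ k * k) * (n ^ k * (2 * R ^ 2)) := by gcongr
    _ = Real.sqrt n / (μ * k) * (R * B) := by
        rw [hγ]
        field_simp
    _ ≤ _ := by
        gcongr
        rw [← hγ]
        nlinarith [mul_pos hsn (mul_pos hμ hγ0)]

theorem point_saga_nonsmooth_rate {d n : ℕ} (hn : 0 < n) (μ B R : ℝ)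
    (hμ : 0 < μ) (hB : 0 < B) (hR : 0 < R)
    (f : Fin n → EuclideanSpace ℝ (Fin d) → ℝ)
    (hconv : ∀ i, StrongConvexOn Set.univ μ (f i))
    (xstar : EuclideanSpace ℝ (Fin d))
    (hmin : ∀ y, (1 / (n : ℝ)) * ∑ i, f i xstar ≤ (1 / (n : ℝ)) * ∑ i, f i y)
    (gstar : Fin n → EuclideanSpace ℝ (Fin d))
    (hgstar : ∀ i, IsSubgradient (f i) xstar (gstar i))
    (hgsum : ∑ i, gstar i = 0)
    (γ : ℝ) (hγ : γ = R / (B * Real.sqrt n))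
    (x0 : EuclideanSpace ℝ (Fin d)) (g0 : Fin n → EuclideanSpace ℝ (Fin d))
    (hg0 : ∀ i, IsSubgradient (f i) x0 (g0 i))
    (hg0B : ∀ i, ‖g0 i - gstar i‖ ≤ B)
    (hx0R : ‖x0 - xstar‖ ≤ R)
    -- the iterates and gradient tables, indexed by the history of sampled indices
    (X : List (Fin n) → EuclideanSpace ℝ (Fin d))
    (G : List (Fin n) → Fin n → EuclideanSpace ℝ (Fin d))
    (hX0 : X [] = x0) (hG0 : ∀ i, G [] i = g0 i)
    (hstep : ∀ (p : List (Fin n)) (j : Fin n),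
      IsProx γ (f j) (X p + γ • (G p j - (1 / (n : ℝ)) • ∑ i, G p i)) (X (p ++ [j])))
    (hupd : ∀ (p : List (Fin n)) (j : Fin n),
      G (p ++ [j]) j = (1 / γ) •
        ((X p + γ • (G p j - (1 / (n : ℝ)) • ∑ i, G p i)) - X (p ++ [j])))
    (hupd' : ∀ (p : List (Fin n)) (j i : Fin n), i ≠ j → G (p ++ [j]) i = G p i)
    (k : ℕ) (hk : 0 < k) :
    (1 / (n : ℝ) ^ k) * ∑ ω : Fin k → Fin n,
        ‖(1 / (k : ℝ)) • ∑ t ∈ Finset.Icc 1 k, X ((List.ofFn ω).take t) - xstar‖ ^ 2 ≤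
      2 * (Real.sqrt n * (1 + μ * (R / (B * Real.sqrt n)))) / (μ * k) * (R * B) :=
  point_saga_nonsmooth_rate_general hn μ B R hμ hB hR f hconv xstar gstar hgstar hgsum γ hγ x0 g0
    hg0B hx0R X G hX0 hG0 hstep hupd hupd' k hk
end
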